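/- Suppose a sequence ((X_n, Y_n)) of ℤ²-valued random variables satisfies a local limit theorem with parameters (μ_X(n), μ_Y(n)) and (σ_X²(n), σ_Y²(n)), where σ_X(n), σ_Y(n) > 0. Suppose for each n the ℤ²-valued random pair (A_n, B_n) is defined on the same probability space, is independent of (X_n, Y_n), has finite second moments, and satisfies Var[A_n] = o(σ_X²(n)) and Var[B_n] = o(σ_Y²(n)) as n → ∞. Then ((A_n + X_n, B_n + Y_n)) satisfies a local limit theorem with parameters (E[A_n] + μ_X(n), E[B_n] + μ_Y(n)) and (σ_X²(n), σ_Y²(n)). -/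

import Mathlib

open MeasureTheory ProbabilityTheory Filter

/-- The bivariate discrete Gaussian comparison function. -/
noncomputable def gauss2 (μX μY σX σY : ℝ) (x y : ℤ) : ℝ :=
  (1 / (2 * Real.pi * σX * σY)) *
    Real.exp (-((x : ℝ) - μX) ^ 2 / (2 * σX ^ 2) - ((y : ℝ) - μY) ^ 2 / (2 * σY ^ 2))

/-- A sequence `((X_n, Y_n))` of `ℤ²`-valued random variables satisfies a local limit
theorem with parameters `(μX, μY)` and `(σX², σY²)` if
`sup_{(x,y) ∈ ℤ²} |Pr(X_n = x, Y_n = y) − gauss2(...)| = o(1/(σX·σY))`. -/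
def SatisfiesLLT {Ω : ℕ → Type*} [∀ n, MeasurableSpace (Ω n)]
    (μ : ∀ n, Measure (Ω n)) (X Y : ∀ n, Ω n → ℤ)
    (μX μY σX σY : ℕ → ℝ) : Prop :=
  (fun n => ⨆ xy : ℤ × ℤ,
      |(μ n {ω | X n ω = xy.1 ∧ Y n ω = xy.2}).toReal
        - gauss2 (μX n) (μY n) (σX n) (σY n) xy.1 xy.2|)
    =o[atTop] (fun n => 1 / (σX n * σY n))

/-! Conditioning on `(A, B)`, independence gives
`P(A + X = x, B + Y = y) = E[P(X = x - A, Y = y - B)]` (the inner probability taken with `A, B`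
frozen), and the LLT approximates each inner probability by the Gaussian centred at
`(x - A - μX, y - B - μY)`, uniformly up to `o(1/(σX σY))`. Since `u ↦ exp (-u²/2)` is
1-Lipschitz, moving that centre to `(x - E A - μX, y - E B - μY)` costs at most
`(|A - E A| / σX + |B - E B| / σY) / (2π σX σY)`. Taking expectations and using
`E |A - E A| ≤ √Var A`, this is `o(1/(σX σY))` because `Var A = o(σX²)` and `Var B = o(σY²)`. -/

open Real Topology

lemma abs_mul_exp_neg_sq_div_two_le_one (u : ℝ) : |u| * exp (-u ^ 2 / 2) ≤ 1 := by
  have h : |u| ≤ exp (u ^ 2 / 2) := by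
    nlinarith [add_one_le_exp (u ^ 2 / 2), sq_abs u, sq_nonneg (|u| - 1)]
  calc |u| * exp (-u ^ 2 / 2) ≤ exp (u ^ 2 / 2) * exp (-u ^ 2 / 2) := by gcongr
    _ = 1 := by rw [← exp_add]; ring_nf; exact exp_zero

lemma lipschitzWith_exp_neg_sq_div_two : LipschitzWith 1 (fun u : ℝ => exp (-u ^ 2 / 2)) := by
  have hderiv (u : ℝ) : HasDerivAt (fun u : ℝ => exp (-u ^ 2 / 2)) (exp (-u ^ 2 / 2) * -u) u :=
    (((hasDerivAt_id u).pow 2).neg.div_const 2).exp.congr_deriv (by simp; ring)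
  refine lipschitzWith_of_nnnorm_deriv_le (fun u => (hderiv u).differentiableAt) fun u => ?_
  rw [← NNReal.coe_le_coe, coe_nnnorm, (hderiv u).deriv, norm_mul, norm_neg, Real.norm_eq_abs,
    abs_of_pos (exp_pos _), Real.norm_eq_abs, mul_comm]
  exact abs_mul_exp_neg_sq_div_two_le_one u

lemma gauss2_eq_mul (μX μY σX σY : ℝ) (x y : ℤ) :
    gauss2 μX μY σX σY x y = 1 / (2 * π * σX * σY) *
      (exp (-((x - μX) / σX) ^ 2 / 2) * exp (-((y - μY) / σY) ^ 2 / 2)) := by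
  rw [gauss2, ← exp_add, div_pow, div_pow]
  congr 2
  ring

lemma exp_neg_sq_div_two_le_one (u : ℝ) : exp (-u ^ 2 / 2) ≤ 1 :=
  exp_le_one_iff.mpr (by nlinarith [sq_nonneg u])

lemma abs_exp_neg_sq_div_two_le_one (u : ℝ) : |exp (-u ^ 2 / 2)| ≤ 1 :=
  (abs_of_pos (exp_pos _)).trans_le (exp_neg_sq_div_two_le_one u)

lemma abs_mul_sub_mul_le {a b a' b' : ℝ} (hb : |b| ≤ 1) (ha' : |a'| ≤ 1) :
    |a * b - a' * b'| ≤ |a - a'| + |b - b'| :=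
  calc |a * b - a' * b'| = |(a - a') * b + a' * (b - b')| := by congr 1; ring
    _ ≤ |a - a'| * |b| + |a'| * |b - b'| := by
      rw [← abs_mul, ← abs_mul]; exact abs_add_le _ _
    _ ≤ |a - a'| * 1 + 1 * |b - b'| := by gcongr
    _ = |a - a'| + |b - b'| := by ring

lemma abs_gauss2_sub_gauss2_le {σX σY : ℝ} (hσX : 0 < σX) (hσY : 0 < σY)
    (μX μY μX' μY' : ℝ) (x y x' y' : ℤ) :
    |gauss2 μX μY σX σY x y - gauss2 μX' μY' σX σY x' y'| ≤
      1 / (2 * π * σX * σY) *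
        (|(x - μX) - (x' - μX')| / σX + |(y - μY) - (y' - μY')| / σY) := by
  have lip (m m' σ : ℝ) (hσ : 0 < σ) (t t' : ℤ) :
      |exp (-((t - m) / σ) ^ 2 / 2) - exp (-((t' - m') / σ) ^ 2 / 2)| ≤
        |(t - m) - (t' - m')| / σ := by
    have := lipschitzWith_exp_neg_sq_div_two.dist_le_mul ((t - m) / σ) ((t' - m') / σ)
    rwa [NNReal.coe_one, one_mul, Real.dist_eq, Real.dist_eq, ← sub_div, abs_div,
      abs_of_pos hσ] at this
  rw [gauss2_eq_mul, gauss2_eq_mul, ← mul_sub, abs_mul, abs_of_pos (by positivity)]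
  gcongr
  exact (abs_mul_sub_mul_le (abs_exp_neg_sq_div_two_le_one _)
    (abs_exp_neg_sq_div_two_le_one _)).trans
    (add_le_add (lip _ _ _ hσX _ _) (lip _ _ _ hσY _ _))

lemma gauss2_mem_Icc {σX σY : ℝ} (hσX : 0 < σX) (hσY : 0 < σY) (μX μY : ℝ) (x y : ℤ) :
    gauss2 μX μY σX σY x y ∈ Set.Icc 0 (1 / (2 * π * σX * σY)) := by
  rw [gauss2_eq_mul]
  exact ⟨by positivity, mul_le_of_le_one_right (by positivity) (mul_le_one₀
    (exp_neg_sq_div_two_le_one _) (exp_pos _).le (exp_neg_sq_div_two_le_one _))⟩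

lemma ProbabilityTheory.IndepFun.measure_preimage_prodMk_eq_lintegral
    {Ω α β : Type*} [MeasurableSpace Ω] [MeasurableSpace α] [MeasurableSpace β]
    {μ : Measure Ω} [IsFiniteMeasure μ] {V : Ω → α} {W : Ω → β}
    (hV : Measurable V) (hW : Measurable W) (hVW : IndepFun V W μ)
    {s : Set (α × β)} (hs : MeasurableSet s) :
    μ ((fun ω => (V ω, W ω)) ⁻¹' s) = ∫⁻ ω, μ {ω' | (V ω, W ω') ∈ s} ∂μ := by
  rw [← Measure.map_apply (hV.prodMk hW) hs,
    (indepFun_iff_map_prod_eq_prod_map_map hV.aemeasurable hW.aemeasurable).mp hVW,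
    Measure.prod_apply hs, lintegral_map (measurable_measure_prodMk_left hs) hV]
  refine lintegral_congr fun ω => ?_
  rw [Measure.map_apply hW (measurable_prodMk_left hs)]
  rfl

lemma toReal_measure_add_eq_integral {Ω : Type*} [MeasurableSpace Ω] (μ : Measure Ω)
    [IsProbabilityMeasure μ] (X Y A B : Ω → ℤ) (hmX : Measurable X) (hmY : Measurable Y)
    (hmA : Measurable A) (hmB : Measurable B)
    (hindep : IndepFun (fun ω => (A ω, B ω)) (fun ω => (X ω, Y ω)) μ) (x y : ℤ) :
    (μ {ω | A ω + X ω = x ∧ B ω + Y ω = y}).toReal =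
      ∫ ω, (μ {ω' | X ω' = x - A ω ∧ Y ω' = y - B ω}).toReal ∂μ := by
  have h := hindep.measure_preimage_prodMk_eq_lintegral (hmA.prodMk hmB) (hmX.prodMk hmY)
    (s := {pq | pq.1 + pq.2 = (x, y)}) (measurableSet_eq_fun measurable_add measurable_const)
  have hm : Measurable fun ω => μ {ω' | X ω' = x - A ω ∧ Y ω' = y - B ω} :=
    (measurable_of_countable fun p : ℤ × ℤ => μ {ω' | X ω' = x - p.1 ∧ Y ω' = y - p.2}).comp
      (hmA.prodMk hmB)
  rw [integral_toReal hm.aemeasurable (ae_of_all _ fun _ => measure_lt_top μ _)]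
  simpa [Prod.ext_iff, eq_sub_iff_add_eq'] using congrArg ENNReal.toReal h

lemma integral_abs_sub_integral_le_sqrt_variance {Ω : Type*} [MeasurableSpace Ω] {μ : Measure Ω}
    [IsProbabilityMeasure μ] {Z : Ω → ℝ} (hZ : MemLp Z 2 μ) :
    ∫ ω, |Z ω - ∫ ω', Z ω' ∂μ| ∂μ ≤ Real.sqrt (variance Z μ) := by
  set W := fun ω => |Z ω - ∫ ω', Z ω' ∂μ|
  have hW : MemLp W 2 μ := (hZ.sub (memLp_const _)).abs
  have hW2 : ∫ ω, W ω ^ 2 ∂μ = variance Z μ := by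
    simp only [W, sq_abs, variance_eq_integral hZ.aemeasurable]
  have := variance_nonneg W μ
  rw [variance_eq_sub hW] at this
  refine (le_abs_self _).trans (Real.abs_le_sqrt ?_)
  rw [← hW2]
  simpa using this

lemma abs_toReal_measure_add_sub_gauss2_le {Ω : Type*} [MeasurableSpace Ω] (μ : Measure Ω)
    [IsProbabilityMeasure μ] (X Y A B : Ω → ℤ) (hmX : Measurable X) (hmY : Measurable Y)
    (hmA : Measurable A) (hmB : Measurable B)
    (hindep : IndepFun (fun ω => (A ω, B ω)) (fun ω => (X ω, Y ω)) μ)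
    (hA : MemLp (fun ω => (A ω : ℝ)) 2 μ) (hB : MemLp (fun ω => (B ω : ℝ)) 2 μ)
    {μX μY σX σY ε : ℝ} (hσX : 0 < σX) (hσY : 0 < σY)
    (hε : ∀ u v : ℤ, |(μ {ω | X ω = u ∧ Y ω = v}).toReal - gauss2 μX μY σX σY u v| ≤ ε)
    (x y : ℤ) :
    |(μ {ω | A ω + X ω = x ∧ B ω + Y ω = y}).toReal -
        gauss2 ((∫ ω, (A ω : ℝ) ∂μ) + μX) ((∫ ω, (B ω : ℝ) ∂μ) + μY) σX σY x y| ≤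
      ε + 1 / (2 * π * σX * σY) *
        (Real.sqrt (variance (fun ω => (A ω : ℝ)) μ) / σX +
          Real.sqrt (variance (fun ω => (B ω : ℝ)) μ) / σY) := by
  set mA := ∫ ω, (A ω : ℝ) ∂μ
  set mB := ∫ ω, (B ω : ℝ) ∂μ
  set c := 1 / (2 * π * σX * σY)
  set G := gauss2 (mA + μX) (mB + μY) σX σY x y
  set f := fun ω => (μ {ω' | X ω' = x - A ω ∧ Y ω' = y - B ω}).toReal
  set bound := fun ω => ε + c * (|(A ω : ℝ) - mA| / σX + |(B ω : ℝ) - mB| / σY)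
  have hf_le (ω : Ω) : |f ω - G| ≤ bound ω := by
    have hshift := abs_gauss2_sub_gauss2_le hσX hσY μX μY (mA + μX) (mB + μY)
      (x - A ω) (y - B ω) x y
    have hcentre (t a : ℤ) (m μ₀ : ℝ) : |((t - a : ℤ) - μ₀) - (t - (m + μ₀))| = |(a : ℝ) - m| := by
      push_cast; rw [← abs_neg]; ring_nf
    rw [hcentre, hcentre] at hshift
    exact (abs_sub_le _ _ _).trans (add_le_add (hε _ _) hshift)
  have hf : Integrable f μ := by
    refine .of_bound ((measurable_of_countable fun p : ℤ × ℤ =>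
      (μ {ω' | X ω' = x - p.1 ∧ Y ω' = y - p.2}).toReal).comp
        (hmA.prodMk hmB)).aestronglyMeasurable 1 (ae_of_all _ fun ω => ?_)
    rw [Real.norm_eq_abs, abs_of_nonneg ENNReal.toReal_nonneg]
    exact measureReal_le_one
  have hAc := (hA.integrable one_le_two).sub (integrable_const mA)
  have hBc := (hB.integrable one_le_two).sub (integrable_const mB)
  have hbound : Integrable bound μ :=
    (integrable_const ε).add (((hAc.abs.div_const σX).add (hBc.abs.div_const σY)).const_mul c)
  rw [toReal_measure_add_eq_integral μ X Y A B hmX hmY hmA hmB hindep]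
  calc |∫ ω, f ω ∂μ - G| = |∫ ω, (f ω - G) ∂μ| := by
        rw [integral_sub hf (integrable_const G), integral_const, probReal_univ, one_smul]
    _ ≤ ∫ ω, |f ω - G| ∂μ := abs_integral_le_integral_abs
    _ ≤ ∫ ω, bound ω ∂μ := integral_mono (hf.sub (integrable_const G)).abs hbound hf_le
    _ = ε + c * ((∫ ω, |(A ω : ℝ) - mA| ∂μ) / σX + (∫ ω, |(B ω : ℝ) - mB| ∂μ) / σY) := by
        rw [integral_add (integrable_const ε), integral_const, probReal_univ, one_smul,
          integral_const_mul, integral_add, integral_div, integral_div]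
        · exact hAc.abs.div_const σX
        · exact hBc.abs.div_const σY
        · exact ((hAc.abs.div_const σX).add (hBc.abs.div_const σY)).const_mul c
    _ ≤ _ := by
        gcongr
        · exact integral_abs_sub_integral_le_sqrt_variance hA
        · exact integral_abs_sub_integral_le_sqrt_variance hB

lemma abs_toReal_measure_sub_gauss2_le_iSup {Ω : Type*} [MeasurableSpace Ω] (μ : Measure Ω)
    [IsProbabilityMeasure μ] (X Y : Ω → ℤ) {μX μY σX σY : ℝ} (hσX : 0 < σX) (hσY : 0 < σY)
    (u v : ℤ) :
    |(μ {ω | X ω = u ∧ Y ω = v}).toReal - gauss2 μX μY σX σY u v| ≤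
      ⨆ xy : ℤ × ℤ, |(μ {ω | X ω = xy.1 ∧ Y ω = xy.2}).toReal - gauss2 μX μY σX σY xy.1 xy.2| := by
  refine le_ciSup (f := fun xy : ℤ × ℤ =>
    |(μ {ω | X ω = xy.1 ∧ Y ω = xy.2}).toReal - gauss2 μX μY σX σY xy.1 xy.2|)
    ⟨1 + 1 / (2 * π * σX * σY), ?_⟩ (u, v)
  rintro _ ⟨xy, rfl⟩
  have hp : (μ {ω | X ω = xy.1 ∧ Y ω = xy.2}).toReal ∈ Set.Icc (0 : ℝ) 1 :=
    ⟨ENNReal.toReal_nonneg, measureReal_le_one⟩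
  have hg := gauss2_mem_Icc hσX hσY μX μY xy.1 xy.2
  have hc : 0 < 1 / (2 * π * σX * σY) := by positivity
  exact abs_sub_le_iff.mpr ⟨by linarith [hp.2, hg.1], by linarith [hp.1, hg.2]⟩

lemma satisfiesLLT_of_forall_abs_sub_le {Ω : ℕ → Type*} [∀ n, MeasurableSpace (Ω n)]
    (μ : ∀ n, Measure (Ω n)) (X Y : ∀ n, Ω n → ℤ) (μX μY σX σY b : ℕ → ℝ)
    (hb : b =o[atTop] fun n => 1 / (σX n * σY n))
    (h : ∀ n (x y : ℤ),
      |(μ n {ω | X n ω = x ∧ Y n ω = y}).toReal - gauss2 (μX n) (μY n) (σX n) (σY n) x y| ≤ b n) :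
    SatisfiesLLT μ X Y μX μY σX σY := by
  refine (Asymptotics.isBigO_of_le _ fun n => ?_).trans_isLittleO hb
  rw [Real.norm_eq_abs, Real.norm_eq_abs, abs_of_nonneg (Real.iSup_nonneg fun _ => abs_nonneg _)]
  exact ciSup_le fun xy => (h n xy.1 xy.2).trans (le_abs_self _)

lemma tendsto_sqrt_div_of_isLittleO_sq {α : Type*} {l : Filter α} {v σ : α → ℝ}
    (hv : v =o[l] fun n => σ n ^ 2) (hσ : ∀ n, 0 ≤ σ n) :
    Tendsto (fun n => Real.sqrt (v n) / σ n) l (𝓝 0) := by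
  have := hv.tendsto_div_nhds_zero.sqrt
  rw [Real.sqrt_zero] at this
  refine this.congr fun n => ?_
  rw [Real.sqrt_div' _ (sq_nonneg _), Real.sqrt_sq (hσ n)]

/-- if `((X_n,Y_n))` satisfies a local limit theorem with parameters
`(μX, μY)` and `(σX², σY²)`, and `(A_n, B_n)` is independent of `(X_n, Y_n)`, with finite
second moments and `Var[A_n] = o(σX²)`, `Var[B_n] = o(σY²)`, then `((A_n+X_n, B_n+Y_n))`
satisfies a local limit theorem with parameters `(E[A_n]+μX, E[B_n]+μY)` and
`(σX², σY²)`. -/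
theorem stmt15 {Ω : ℕ → Type*} [∀ n, MeasurableSpace (Ω n)]
    (μ : ∀ n, Measure (Ω n)) [∀ n, IsProbabilityMeasure (μ n)]
    (X Y A B : ∀ n, Ω n → ℤ)
    (μX μY σX σY : ℕ → ℝ)
    (hσX : ∀ n, 0 < σX n) (hσY : ∀ n, 0 < σY n)
    (hmX : ∀ n, Measurable (X n)) (hmY : ∀ n, Measurable (Y n))
    (hmA : ∀ n, Measurable (A n)) (hmB : ∀ n, Measurable (B n))
    (hLLT : SatisfiesLLT μ X Y μX μY σX σY)
    (hindep : ∀ n, IndepFun (fun ω => (A n ω, B n ω)) (fun ω => (X n ω, Y n ω)) (μ n))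
    (hA2 : ∀ n, Integrable (fun ω => ((A n ω : ℝ)) ^ 2) (μ n))
    (hB2 : ∀ n, Integrable (fun ω => ((B n ω : ℝ)) ^ 2) (μ n))
    (hVarA : (fun n => variance (fun ω => (A n ω : ℝ)) (μ n)) =o[atTop]
      (fun n => (σX n) ^ 2))
    (hVarB : (fun n => variance (fun ω => (B n ω : ℝ)) (μ n)) =o[atTop]
      (fun n => (σY n) ^ 2)) :
    SatisfiesLLT μ (fun n ω => A n ω + X n ω) (fun n ω => B n ω + Y n ω)
      (fun n => (∫ ω, (A n ω : ℝ) ∂(μ n)) + μX n)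
      (fun n => (∫ ω, (B n ω : ℝ) ∂(μ n)) + μY n)
      σX σY := by
  have hA (n : ℕ) : MemLp (fun ω => (A n ω : ℝ)) 2 (μ n) := (memLp_two_iff_integrable_sq
    ((measurable_of_countable _).comp (hmA n)).aestronglyMeasurable).mpr (hA2 n)
  have hB (n : ℕ) : MemLp (fun ω => (B n ω : ℝ)) 2 (μ n) := (memLp_two_iff_integrable_sq
    ((measurable_of_countable _).comp (hmB n)).aestronglyMeasurable).mpr (hB2 n)
  have hspread : (fun n => 1 / (2 * π * σX n * σY n) *
      (Real.sqrt (variance (fun ω => (A n ω : ℝ)) (μ n)) / σX n +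
        Real.sqrt (variance (fun ω => (B n ω : ℝ)) (μ n)) / σY n)) =o[atTop]
      fun n => 1 / (σX n * σY n) := by
    have ht := ((tendsto_sqrt_div_of_isLittleO_sq hVarA fun n => (hσX n).le).add
      (tendsto_sqrt_div_of_isLittleO_sq hVarB fun n => (hσY n).le)).const_mul (1 / (2 * π))
    rw [add_zero, mul_zero] at ht
    refine (((Asymptotics.isLittleO_one_iff ℝ).mpr ht).mul_isBigO
      (Asymptotics.isBigO_refl _ _)).congr (fun n => ?_) fun n => one_mul _
    field_simp
  exact satisfiesLLT_of_forall_abs_sub_le μ _ _ _ _ σX σY _ (hLLT.add hspread) fun n x y =>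
    abs_toReal_measure_add_sub_gauss2_le (μ n) (X n) (Y n) (A n) (B n) (hmX n) (hmY n) (hmA n)
      (hmB n) (hindep n) (hA n) (hB n) (hσX n) (hσY n)
      (abs_toReal_measure_sub_gauss2_le_iSup (μ n) (X n) (Y n) (hσX n) (hσY n)) x y
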